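/- Let Σ = (A,𝔤,{X¹,…,Xⁿ}) be a regular embedded noncommutative manifold with hermitian basis {∂_a}_{a=1}^m of 𝔤, and let γ_{a,ij} ∈ A satisfy γ_{a,ij}* = γ_{a,ji} and γ_{a,bc} = γ_{c,ba}, where γ_{a,bc} = Σ_{i,j}(e_b^i)*·γ_{a,ij}·e_c^j. Then the connection ∇ on TΣ determined by ∇_{∂_a} e_b = Σ_{c,p} e_c·h^{cp}·( h⁰(e_p, ∂_a e_b) + i·γ_{a,pb} ) (where ∂_a e_b = ê_i·∂_a∂_b(X^i)) is a Levi-Civita connection on (TΣ,h), i.e. it is hermitian and torsion free. In particular (taking γ_{a,ij} = 0), every regular embedded noncommutative manifold admits a Levi-Civita connection. -/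
import Mathlib


/-- The right action of `A` on the free right module `Aⁿ`. -/
def smulR {A : Type*} [Ring A] {n : ℕ} (U : Fin n → A) (a : A) : Fin n → A :=
  fun i => U i * a

/-- A (ℂ-linear) derivation of the unital ∗-algebra `A`. -/
def IsCDeriv {A : Type*} [Ring A] [Algebra ℂ A] (δ : A → A) : Prop :=
  (∀ x y, δ (x + y) = δ x + δ y) ∧ (∀ (c : ℂ) (x : A), δ (c • x) = c • δ x) ∧
  (∀ x y, δ (x * y) = δ x * y + x * δ y)

/-- The conjugate derivation `δ*(f) = (δ(f*))*`. -/
def starDeriv {A : Type*} [Ring A] [StarRing A] (δ : A → A) : A → A :=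
  fun f => star (δ (star f))

/-- A Lie pair `(A,𝔤)`: `𝔤` is a (complex) Lie algebra of derivations of `A`
which is closed under `δ ↦ δ*`. -/
def IsLiePair {A : Type*} [Ring A] [StarRing A] [Algebra ℂ A]
    (G : Set (A → A)) : Prop :=
  (∀ δ ∈ G, IsCDeriv δ) ∧
  (∀ δ₁ ∈ G, ∀ δ₂ ∈ G, δ₁ + δ₂ ∈ G) ∧
  (∀ (c : ℂ), ∀ δ ∈ G, c • δ ∈ G) ∧
  (∀ δ₁ ∈ G, ∀ δ₂ ∈ G, (fun x => δ₁ (δ₂ x) - δ₂ (δ₁ x)) ∈ G) ∧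
  (∀ δ ∈ G, starDeriv δ ∈ G)

/-- The standard hermitian form `h⁰(U,V) = Σ_i (U^i)*·V^i` on `Aⁿ`. -/
def hform {A : Type*} [Ring A] [StarRing A] {n : ℕ} (U V : Fin n → A) : A :=
  ∑ i, star (U i) * V i

/-- The generators `e_a = φ(∂_a) = ê_i·∂_a(X^i)` of the module of vector fields `TΣ`. -/
def eT {A : Type*} {n m : ℕ} (pd : Fin m → (A → A)) (X : Fin n → A)
    (a : Fin m) : Fin n → A :=
  fun i => pd a (X i)

/-- Membership in `TΣ`, the right submodule generated by `e₁,…,e_m`. -/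
def InT {A : Type*} [Ring A] {n m : ℕ} (pd : Fin m → (A → A)) (X : Fin n → A)
    (U : Fin n → A) : Prop :=
  ∃ cf : Fin m → A, U = fun i => ∑ a, eT pd X a i * cf a

/-- The projection `p(U) = Σ_{a,b} e_a·h^{ab}·h⁰(e_b,U)` onto `TΣ`. -/
def tProj {A : Type*} [Ring A] [StarRing A] {n m : ℕ}
    (pd : Fin m → (A → A)) (X : Fin n → A) (hu : Fin m → Fin m → A)
    (U : Fin n → A) : Fin n → A :=
  fun i => ∑ a, ∑ b, eT pd X a i * (hu a b * hform (eT pd X b) U)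

/-- The connection `∇⁰_{∂_a}(ê_iU^i) = ê_i·∂_a(U^i) + i·ê_i·γ_{a,ij}·U^j` on `Aⁿ`. -/
def conn0 {A : Type*} [Ring A] [Algebra ℂ A] {n m : ℕ}
    (pd : Fin m → (A → A)) (γ : Fin m → Fin n → Fin n → A)
    (a : Fin m) (U : Fin n → A) : Fin n → A :=
  fun i => pd a (U i) + ∑ j, Complex.I • (γ a i j * U j)

/-- The projected connection `∇ = p∘∇⁰`, i.e. the connection on `TΣ` determined by
`∇_{∂_a}(e_b m^b) = e_b·∂_a(m^b) + e_c·h^{cp}·(h⁰(e_p,∂_a e_b) + i·γ_{a,pb})·m^b`. -/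
def connNabla {A : Type*} [Ring A] [StarRing A] [Algebra ℂ A] {n m : ℕ}
    (pd : Fin m → (A → A)) (X : Fin n → A) (hu : Fin m → Fin m → A)
    (γ : Fin m → Fin n → Fin n → A) (a : Fin m) (U : Fin n → A) : Fin n → A :=
  tProj pd X hu (conn0 pd γ a U)

/-- The components `γ_{a,bc} = Σ_{i,j} (e_b^i)*·γ_{a,ij}·e_c^j`. -/
def gammaT {A : Type*} [Ring A] [StarRing A] {n m : ℕ}
    (pd : Fin m → (A → A)) (X : Fin n → A) (γ : Fin m → Fin n → Fin n → A)
    (a b c : Fin m) : A :=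
  ∑ i, ∑ j, star (eT pd X b i) * (γ a i j * eT pd X c j)

section LC_helpers
set_option linter.unusedSectionVars false

variable {A : Type*} [Ring A] [StarRing A] [Algebra ℂ A] [StarModule ℂ A] {n m : ℕ}

lemma hform_star (U V : Fin n → A) : star (hform U V) = hform V U := by
  simp [hform, star_sum]

lemma hform_add (U V W : Fin n → A) :
    hform U (fun i => V i + W i) = hform U V + hform U W := by
  simp [hform, mul_add, Finset.sum_add_distrib]

lemma hform_sub (U V W : Fin n → A) :
    hform U (fun i => V i - W i) = hform U V - hform U W := by
  simp [hform, mul_sub, Finset.sum_sub_distrib]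

lemma hform_sum {k : ℕ} (U : Fin n → A) (V : Fin k → Fin n → A) :
    hform U (fun i => ∑ c, V c i) = ∑ c, hform U (V c) := by
  simp only [hform, Finset.mul_sum]
  exact Finset.sum_comm

lemma hform_mulR (U V : Fin n → A) (f : A) :
    hform U (fun i => V i * f) = hform U V * f := by
  simp [hform, Finset.sum_mul, mul_assoc]

lemma tProj_add (pd : Fin m → (A → A)) (X : Fin n → A) (hu : Fin m → Fin m → A)
    (U V : Fin n → A) :
    tProj pd X hu (fun i => U i + V i) =
      fun i => tProj pd X hu U i + tProj pd X hu V i := by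
  funext i
  simp [tProj, hform_add, mul_add, Finset.sum_add_distrib]

lemma tProj_sub (pd : Fin m → (A → A)) (X : Fin n → A) (hu : Fin m → Fin m → A)
    (U V : Fin n → A) :
    tProj pd X hu (fun i => U i - V i) =
      fun i => tProj pd X hu U i - tProj pd X hu V i := by
  funext i
  simp [tProj, hform_sub, mul_sub, Finset.sum_sub_distrib]

lemma tProj_sum {k : ℕ} (pd : Fin m → (A → A)) (X : Fin n → A) (hu : Fin m → Fin m → A)
    (V : Fin k → Fin n → A) :
    tProj pd X hu (fun i => ∑ c, V c i) =
      fun i => ∑ c, tProj pd X hu (V c) i := by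
  funext i
  simp only [tProj, hform_sum, Finset.mul_sum]
  conv_rhs => rw [Finset.sum_comm]
  exact Finset.sum_congr rfl fun a _ => Finset.sum_comm

lemma tProj_mulR (pd : Fin m → (A → A)) (X : Fin n → A) (hu : Fin m → Fin m → A)
    (U : Fin n → A) (f : A) :
    tProj pd X hu (fun i => U i * f) = fun i => tProj pd X hu U i * f := by
  funext i
  simp [tProj, hform_mulR, Finset.sum_mul, mul_assoc]

lemma tProj_inT (pd : Fin m → (A → A)) (X : Fin n → A) (hu : Fin m → Fin m → A)
    (U : Fin n → A) : InT pd X (tProj pd X hu U) := by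
  refine ⟨fun a => ∑ b, hu a b * hform (eT pd X b) U, ?_⟩
  funext i
  simp [tProj, Finset.mul_sum]

lemma tProj_fix (pd : Fin m → (A → A)) (X : Fin n → A) (hu : Fin m → Fin m → A)
    (hureg : ∀ c i, (∑ a, ∑ b, eT pd X a i * (hu a b * hform (eT pd X b) (eT pd X c)))
      = eT pd X c i)
    (U : Fin n → A) (hU : InT pd X U) : tProj pd X hu U = U := by
  obtain ⟨cf, rfl⟩ := hU
  rw [tProj_sum]
  funext i
  refine Finset.sum_congr rfl fun c _ => ?_
  have := congrFun (tProj_mulR pd X hu (eT pd X c) (cf c)) i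
  rw [this]
  have h2 : tProj pd X hu (eT pd X c) i = eT pd X c i := hureg c i
  rw [h2]

lemma tProj_adjoint (pd : Fin m → (A → A)) (X : Fin n → A) (hu : Fin m → Fin m → A)
    (hustar : ∀ a b, star (hu a b) = hu b a) (Z W : Fin n → A) :
    hform (tProj pd X hu Z) W = hform Z (tProj pd X hu W) := by
  have hL : hform (tProj pd X hu Z) W
      = ∑ a, ∑ b, hform Z (eT pd X b) * (hu b a * hform (eT pd X a) W) := by
    show (∑ i, star (tProj pd X hu Z i) * W i) = _
    have hstar : ∀ i, star (tProj pd X hu Z i)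
        = ∑ a, ∑ b, hform Z (eT pd X b) * (hu b a * star (eT pd X a i)) := by
      intro i
      simp only [tProj, star_sum, star_mul, hustar, hform_star, mul_assoc]
    simp only [hstar, Finset.sum_mul, mul_assoc]
    rw [Finset.sum_comm]
    refine Finset.sum_congr rfl fun a _ => ?_
    rw [Finset.sum_comm]
    refine Finset.sum_congr rfl fun b _ => ?_
    simp only [hform, ← Finset.mul_sum]
  have hR : hform Z (tProj pd X hu W)
      = ∑ a, ∑ b, hform Z (eT pd X a) * (hu a b * hform (eT pd X b) W) := by
    show (∑ i, star (Z i) * tProj pd X hu W i) = _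
    simp only [tProj, Finset.mul_sum]
    rw [Finset.sum_comm]
    refine Finset.sum_congr rfl fun a _ => ?_
    rw [Finset.sum_comm]
    refine Finset.sum_congr rfl fun b _ => ?_
    simp only [hform, ← Finset.mul_sum, ← mul_assoc, Finset.sum_mul]
  rw [hL, hR, Finset.sum_comm]




lemma conn0_add {pd : Fin m → (A → A)} (γ : Fin m → Fin n → Fin n → A) (a : Fin m)
    (hadd : ∀ x y, pd a (x + y) = pd a x + pd a y) (U V : Fin n → A) :
    conn0 pd γ a (U + V) = fun i => conn0 pd γ a U i + conn0 pd γ a V i := by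
  funext i
  simp only [conn0, Pi.add_apply, hadd, mul_add, smul_add, Finset.sum_add_distrib]
  abel

lemma conn0_mulR {pd : Fin m → (A → A)} (γ : Fin m → Fin n → Fin n → A) (a : Fin m)
    (hleib : ∀ x y, pd a (x * y) = pd a x * y + x * pd a y) (U : Fin n → A) (f : A) :
    conn0 pd γ a (smulR U f) = fun i => conn0 pd γ a U i * f + U i * pd a f := by
  funext i
  simp only [conn0, smulR, hleib, add_mul, Finset.sum_mul, smul_mul_assoc, mul_assoc]
  abel

lemma conn0_metric {pd : Fin m → (A → A)} (γ : Fin m → Fin n → Fin n → A) (a : Fin m)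
    (hadd : ∀ x y, pd a (x + y) = pd a x + pd a y)
    (hleib : ∀ x y, pd a (x * y) = pd a x * y + x * pd a y)
    (pdstar : ∀ f, pd a (star f) = star (pd a f))
    (hγa : ∀ i j, star (γ a i j) = γ a j i) (U V : Fin n → A) :
    pd a (hform U V) = hform (conn0 pd γ a U) V + hform U (conn0 pd γ a V) := by
  have hsum : pd a (hform U V)
      = ∑ i, (star (pd a (U i)) * V i + star (U i) * pd a (V i)) := by
    have hz : pd a (∑ i, star (U i) * V i) = ∑ i, pd a (star (U i) * V i) :=
      map_sum (AddMonoidHom.mk' (pd a) hadd) _ Finset.univ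
    show pd a (∑ i, star (U i) * V i) = _
    rw [hz]
    refine Finset.sum_congr rfl fun i _ => ?_
    rw [hleib, pdstar]
  have h1 : hform (conn0 pd γ a U) V
      = (∑ i, star (pd a (U i)) * V i)
        + (-(Complex.I • ∑ i, ∑ j, star (U j) * (γ a j i * V i))) := by
    simp only [hform, conn0, star_add, star_sum, star_smul, star_mul, hγa,
      Complex.star_def, Complex.conj_I, add_mul, neg_mul, Finset.sum_mul,
      smul_mul_assoc, mul_assoc, Finset.sum_add_distrib, neg_smul,
      Finset.sum_neg_distrib, Finset.smul_sum]
  have h2 : hform U (conn0 pd γ a V)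
      = (∑ i, star (U i) * pd a (V i))
        + Complex.I • ∑ i, ∑ j, star (U i) * (γ a i j * V j) := by
    simp only [hform, conn0, mul_add, Finset.sum_add_distrib, mul_smul_comm,
      Finset.mul_sum, Finset.smul_sum, mul_assoc]
  have hswap : (∑ i, ∑ j, star (U j) * (γ a j i * V i))
      = ∑ i, ∑ j, star (U i) * (γ a i j * V j) := Finset.sum_comm
  rw [hsum, h1, h2, hswap, Finset.sum_add_distrib]
  abel



lemma hform_eT_gamma (pd : Fin m → (A → A)) (X : Fin n → A)
    (γ : Fin m → Fin n → Fin n → A) (a : Fin m) (p b : Fin m) :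
    hform (eT pd X p) (fun i => ∑ j, Complex.I • (γ a i j * eT pd X b j))
      = Complex.I • gammaT pd X γ a p b := by
  simp only [hform, gammaT, Finset.mul_sum, mul_smul_comm, Finset.smul_sum]

lemma hform_conn0_eT (pd : Fin m → (A → A)) (X : Fin n → A)
    (γ : Fin m → Fin n → Fin n → A) (a b p : Fin m) :
    hform (eT pd X p) (conn0 pd γ a (eT pd X b))
      = hform (eT pd X p) (fun j => pd a (pd b (X j)))
        + Complex.I • gammaT pd X γ a p b := by
  have h0 : conn0 pd γ a (eT pd X b)
      = fun i => pd a (pd b (X i)) + ∑ j, Complex.I • (γ a i j * eT pd X b j) := rfl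
  rw [h0, hform_add (eT pd X p) (fun j => pd a (pd b (X j)))
    (fun i => ∑ j, Complex.I • (γ a i j * eT pd X b j)), hform_eT_gamma]


end LC_helpers


/-- For a regular embedded noncommutative manifold and any
`γ_{a,ij}` with `γ_{a,ij}* = γ_{a,ji}` and `γ_{a,bc} = γ_{c,ba}`, the connection
determined by `∇_{∂_a} e_b = Σ_{c,p} e_c·h^{cp}·(h⁰(e_p,∂_a e_b) + i·γ_{a,pb})`
is a Levi-Civita connection on `(TΣ,h)`: it is hermitian and torsion free.
In particular (e.g. for `γ = 0`), every regular embedded noncommutative manifold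
admits a Levi-Civita connection. -/
theorem embedded_manifold_levi_civita
    {A : Type*} [Ring A] [StarRing A] [Algebra ℂ A] [StarModule ℂ A]
    (n m : ℕ) (G : Set (A → A)) (hG : IsLiePair G)
    (pd : Fin m → (A → A))
    (hmem : ∀ a, pd a ∈ G)
    (hsa : ∀ a, starDeriv (pd a) = pd a)
    (hspan : ∀ δ ∈ G, ∃ c : Fin m → ℂ, δ = ∑ a, c a • pd a)
    (hindep : ∀ c : Fin m → ℂ, (∑ a, c a • pd a) = 0 → ∀ a, c a = 0)
    (X : Fin n → A) (hX : ∀ i, star (X i) = X i)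
    (hu : Fin m → Fin m → A)
    (hustar : ∀ a b, star (hu a b) = hu b a)
    (hureg : ∀ c i, (∑ a, ∑ b, eT pd X a i * (hu a b * hform (eT pd X b) (eT pd X c)))
      = eT pd X c i)
    (γ : Fin m → Fin n → Fin n → A)
    (hγ : ∀ a i j, star (γ a i j) = γ a j i)
    (hγsym : ∀ a b c, gammaT pd X γ a b c = gammaT pd X γ c b a) :
    -- ∇ maps TΣ into TΣ, is additive and satisfies the Leibniz rule
    (∀ a U, InT pd X U → InT pd X (connNabla pd X hu γ a U)) ∧
    (∀ a U V, InT pd X U → InT pd X V →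
      connNabla pd X hu γ a (U + V) =
        connNabla pd X hu γ a U + connNabla pd X hu γ a V) ∧
    (∀ a U f, InT pd X U →
      connNabla pd X hu γ a (smulR U f) =
        smulR (connNabla pd X hu γ a U) f + smulR U (pd a f)) ∧
    -- the defining formula ∇_{∂_a} e_b = Σ_{c,p} e_c·h^{cp}·(h⁰(e_p,∂_a e_b) + i·γ_{a,pb})
    (∀ a b, connNabla pd X hu γ a (eT pd X b) =
      fun i => ∑ c, ∑ p, eT pd X c i *
        (hu c p * (hform (eT pd X p) (fun j => pd a (pd b (X j))) +
          Complex.I • gammaT pd X γ a p b))) ∧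
    -- ∇ is hermitian (metric)
    (∀ a U V, InT pd X U → InT pd X V →
      pd a (hform U V) =
        hform (connNabla pd X hu γ a U) V + hform U (connNabla pd X hu γ a V)) ∧
    -- ∇ is torsion free: ∇_{∂_a}φ(∂_b) − ∇_{∂_b}φ(∂_a) = φ([∂_a,∂_b])
    (∀ a b, connNabla pd X hu γ a (eT pd X b) - connNabla pd X hu γ b (eT pd X a) =
      fun i => pd a (pd b (X i)) - pd b (pd a (X i))) := by
  obtain ⟨hderiv, -, -, hbrkG, -⟩ := hG
  have hadd : ∀ a x y, pd a (x + y) = pd a x + pd a y := fun a => (hderiv _ (hmem a)).1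
  have hleib : ∀ a x y, pd a (x * y) = pd a x * y + x * pd a y :=
    fun a => (hderiv _ (hmem a)).2.2
  have pdstar : ∀ a f, pd a (star f) = star (pd a f) := by
    intro a f
    conv_lhs => rw [← hsa a]
    simp [starDeriv]
  have hfix := tProj_fix pd X hu hureg
  refine ⟨?_, ?_, ?_, ?_, ?_, ?_⟩
  · intro a U _
    exact tProj_inT pd X hu _
  · intro a U V _ _
    show tProj pd X hu _ = _
    rw [conn0_add γ a (hadd a), tProj_add]
    rfl
  · intro a U f hU
    show tProj pd X hu _ = _
    rw [conn0_mulR γ a (hleib a), tProj_add, tProj_mulR]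
    have h2 : tProj pd X hu (fun i => U i * pd a f) = fun i => U i * pd a f := by
      rw [tProj_mulR, hfix U hU]
    rw [h2]
    rfl
  · intro a b
    show tProj pd X hu (conn0 pd γ a (eT pd X b)) = _
    funext i
    simp only [tProj]
    refine Finset.sum_congr rfl fun c _ => Finset.sum_congr rfl fun p _ => ?_
    rw [hform_conn0_eT]
  · intro a U V hU hV
    rw [conn0_metric γ a (hadd a) (hleib a) (pdstar a) (hγ a)]
    simp only [connNabla]
    rw [tProj_adjoint pd X hu hustar (conn0 pd γ a U) V,
      ← tProj_adjoint pd X hu hustar U (conn0 pd γ a V), hfix V hV, hfix U hU]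
  · intro a b
    have hDmem : InT pd X (fun i => pd a (pd b (X i)) - pd b (pd a (X i))) := by
      obtain ⟨c, hc⟩ := hspan _ (hbrkG (pd a) (hmem a) (pd b) (hmem b))
      refine ⟨fun d => algebraMap ℂ A (c d), ?_⟩
      funext i
      have h1 : pd a (pd b (X i)) - pd b (pd a (X i)) = (∑ d, c d • pd d) (X i) :=
        congrFun hc (X i)
      rw [h1]
      simp only [Finset.sum_apply, Pi.smul_apply, eT]
      exact Finset.sum_congr rfl fun d _ => by
        rw [Algebra.smul_def, Algebra.commutes]
    have hR : tProj pd X hu (fun i =>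
        (∑ j, Complex.I • (γ a i j * eT pd X b j))
          - ∑ j, Complex.I • (γ b i j * eT pd X a j)) = fun _ => 0 := by
      have hp : ∀ p, hform (eT pd X p) (fun i =>
          (∑ j, Complex.I • (γ a i j * eT pd X b j))
            - ∑ j, Complex.I • (γ b i j * eT pd X a j)) = 0 := by
        intro p
        rw [hform_sub (eT pd X p) (fun i => ∑ j, Complex.I • (γ a i j * eT pd X b j))
          (fun i => ∑ j, Complex.I • (γ b i j * eT pd X a j)),
          hform_eT_gamma, hform_eT_gamma, hγsym b p a]
        exact sub_self _
      funext k
      simp only [tProj, hp, mul_zero, Finset.sum_const_zero]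
    funext i
    have hsub := congrFun (tProj_sub pd X hu (conn0 pd γ a (eT pd X b))
      (conn0 pd γ b (eT pd X a))) i
    show tProj pd X hu (conn0 pd γ a (eT pd X b)) i
      - tProj pd X hu (conn0 pd γ b (eT pd X a)) i = _
    rw [← hsub]
    have key : (fun i => conn0 pd γ a (eT pd X b) i - conn0 pd γ b (eT pd X a) i)
        = fun i => (pd a (pd b (X i)) - pd b (pd a (X i)))
          + ((∑ j, Complex.I • (γ a i j * eT pd X b j))
            - ∑ j, Complex.I • (γ b i j * eT pd X a j)) := by
      funext k
      simp only [conn0, eT]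
      abel
    rw [key, tProj_add, hfix _ hDmem, hR]
    simp
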